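/- For complex α, β, γ with γ + n not a nonpositive integer, set δ_n = δ₀ - n where 1 + α + β = γ + δ₀, and u_n(z) = ₂F₁(α, β; γ + n; z). Then for all z in the open unit disk, (z - 1) u_n'(z) = -δ_{n+1} u_n(z) + (δ_{n+1} - αβ/(γ+n)) u_{n+1}(z). -/

import Mathlib

/-!
Mathlib's `₂F₁` has the same coefficients `A k` as `gaussHyp`, and its series has radius at
least `1` whenever `c` is not a nonpositive integer (the series terminates if `a` or `b` is one),
so on the unit disk `u`, `z u'` and `u'` are given by termwise summation. Then
`(z - 1) u' = ∑ (k A k - (k + 1) A (k + 1)) zᵏ`, and the ratios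
`A (k + 1) / A k = (a + k) (b + k) / ((c + k) (k + 1))` and `A' k / A k = c / (c + k)`, where `A'`
are the coefficients for the lower parameter `c + 1`, turn the relation into a rational identity
between coefficients.
-/

/-- The Gauss hypergeometric series `₂F₁(a, b; c; z)`. -/
noncomputable def gaussHyp (a b c z : ℂ) : ℂ :=
  ∑' n : ℕ, ((ascPochhammer ℂ n).eval a * (ascPochhammer ℂ n).eval b /
    ((ascPochhammer ℂ n).eval c * (n.factorial : ℂ))) * z ^ n

open FormalMultilinearSeries

namespace FormalMultilinearSeries

variable {𝕜 : Type*} [NontriviallyNormedField 𝕜] [CompleteSpace 𝕜] {c : ℕ → 𝕜} {z : 𝕜}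

theorem hasSum_ofScalarsSum (hz : ‖z‖ₑ < (ofScalars 𝕜 c).radius) :
    HasSum (fun n ↦ c n * z ^ n) (ofScalarsSum c z) := by
  have := (ofScalars 𝕜 c).hasSum (x := z) (by simpa using hz)
  simp only [ofScalars_apply_eq, smul_eq_mul] at this
  exact this

theorem hasSum_deriv_ofScalarsSum (hz : ‖z‖ₑ < (ofScalars 𝕜 c).radius) :
    HasSum (fun n ↦ (n + 1) * c (n + 1) * z ^ n) (deriv (ofScalarsSum c) z) := by
  have hp := ((ofScalars 𝕜 c).hasFPowerSeriesOnBall (hz.trans_le' bot_le)).fderiv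
  have := (hp.hasSum (y := z) (by simpa using hz)).mapL (ContinuousLinearMap.apply 𝕜 𝕜 1)
  simp only [zero_add, apply_eq_pow_smul_coeff, ContinuousLinearMap.apply_apply,
    _root_.smul_apply, derivSeries_coeff_one, coeff_ofScalars, nsmul_eq_mul, smul_eq_mul,
    Nat.cast_add, Nat.cast_one, mul_comm (z ^ _)] at this
  exact this

theorem hasSum_mul_deriv_ofScalarsSum (hz : ‖z‖ₑ < (ofScalars 𝕜 c).radius) :
    HasSum (fun n ↦ n * c n * z ^ n) (z * deriv (ofScalarsSum c) z) := by
  refine (hasSum_nat_add_iff' 1).mp ?_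
  have hterm (n : ℕ) :
      z * ((n + 1) * c (n + 1) * z ^ n) = ((n + 1 : ℕ) : 𝕜) * c (n + 1) * z ^ (n + 1) := by
    push_cast
    ring
  simpa [hterm] using (hasSum_deriv_ofScalarsSum hz).mul_left z

end FormalMultilinearSeries

section Coefficients

variable {𝕂 : Type*} [Field 𝕂] (a b c : 𝕂) (k : ℕ)

theorem ordinaryHypergeometricCoefficient_succ :
    ordinaryHypergeometricCoefficient a b c (k + 1) =
      ordinaryHypergeometricCoefficient a b c k * ((a + k) * (b + k) / ((c + k) * (k + 1))) := by
  simp only [ordinaryHypergeometricCoefficient, ascPochhammer_succ_eval, Nat.factorial_succ,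
    Nat.cast_mul, Nat.cast_succ, mul_inv, div_eq_mul_inv]
  ring

theorem ordinaryHypergeometricCoefficient_lower_add_one (hc : c ≠ 0) :
    ordinaryHypergeometricCoefficient a b (c + 1) k =
      ordinaryHypergeometricCoefficient a b c k * (c / (c + k)) := by
  have hshift : (ascPochhammer 𝕂 k).eval (c + 1) = (ascPochhammer 𝕂 k).eval c * (c + k) / c := by
    rw [← ascPochhammer_succ_eval, ascPochhammer_succ_left]
    simp [Polynomial.eval_comp, hc]
  simp only [ordinaryHypergeometricCoefficient, hshift, mul_inv, div_eq_mul_inv, inv_inv]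
  ring

theorem ordinaryHypergeometricCoefficient_contiguous [CharZero 𝕂] (hc : c ≠ 0)
    (hck : c + k ≠ 0) :
    k * ordinaryHypergeometricCoefficient a b c k
        - (k + 1) * ordinaryHypergeometricCoefficient a b c (k + 1) =
      -(a + b - c) * ordinaryHypergeometricCoefficient a b c k
        + (a + b - c - a * b / c) * ordinaryHypergeometricCoefficient a b (c + 1) k := by
  rw [ordinaryHypergeometricCoefficient_succ,
    ordinaryHypergeometricCoefficient_lower_add_one _ _ _ _ hc]
  have : (k : 𝕂) + 1 ≠ 0 := by exact_mod_cast k.succ_ne_zero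
  field_simp
  ring

end Coefficients

section RCLike

variable {𝕂 : Type*} [RCLike 𝕂]

theorem one_le_radius_ordinaryHypergeometricSeries (𝔸 : Type*) [NormedDivisionRing 𝔸]
    [NormedAlgebra 𝕂 𝔸] (a b : 𝕂) {c : 𝕂} (hc : ∀ k : ℕ, (k : 𝕂) ≠ -c) :
    1 ≤ (ordinaryHypergeometricSeries 𝔸 a b c).radius := by
  by_cases ha : ∃ k : ℕ, (k : 𝕂) = -a
  · obtain ⟨k, hk⟩ := ha
    rw [neg_eq_iff_eq_neg.mp hk.symm, ordinaryHypergeometric_radius_top_of_neg_nat₁]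
    exact le_top
  by_cases hb : ∃ k : ℕ, (k : 𝕂) = -b
  · obtain ⟨k, hk⟩ := hb
    rw [neg_eq_iff_eq_neg.mp hk.symm, ordinaryHypergeometric_radius_top_of_neg_nat₂]
    exact le_top
  push Not at ha hb
  rw [ordinaryHypergeometricSeries_radius_eq_one _ _ _ _ fun k ↦ ⟨ha k, hb k, hc k⟩]

theorem sub_one_mul_deriv_ordinaryHypergeometric (a b : 𝕂) {c : 𝕂} (hc : ∀ k : ℕ, (k : 𝕂) ≠ -c)
    {z : 𝕂} (hz : ‖z‖ < 1) :
    (z - 1) * deriv (₂F₁ a b c) z =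
      -(a + b - c) * ₂F₁ a b c z + (a + b - c - a * b / c) * ₂F₁ a b (c + 1) z := by
  have hc1 : ∀ k : ℕ, (k : 𝕂) ≠ -(c + 1) := fun k h ↦ hc (k + 1) (by push_cast; rw [h]; ring)
  have hc0 : c ≠ 0 := fun h ↦ hc 0 (by simp [h])
  have hrad (c' : 𝕂) (hc' : ∀ k : ℕ, (k : 𝕂) ≠ -c') :
      ‖z‖ₑ < (ordinaryHypergeometricSeries 𝕂 a b c').radius :=
    lt_of_lt_of_le (by rwa [← ofReal_norm, ENNReal.ofReal_lt_one])
      (one_le_radius_ordinaryHypergeometricSeries 𝕂 a b hc')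
  have hF := hasSum_ofScalarsSum (hrad c hc)
  have hF1 := hasSum_ofScalarsSum (hrad (c + 1) hc1)
  have hD := hasSum_deriv_ofScalarsSum (hrad c hc)
  have hzD := hasSum_mul_deriv_ofScalarsSum (hrad c hc)
  have hL := (hzD.sub hD).congr_fun fun k ↦ show
      -(a + b - c) * (ordinaryHypergeometricCoefficient a b c k * z ^ k)
        + (a + b - c - a * b / c) * (ordinaryHypergeometricCoefficient a b (c + 1) k * z ^ k) = _ by
    linear_combination -z ^ k *
      ordinaryHypergeometricCoefficient_contiguous a b c k hc0 fun h ↦ hc k (by linear_combination h)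
  rw [sub_one_mul]
  exact hL.unique ((hF.mul_left _).add (hF1.mul_left _))

end RCLike

theorem gaussHyp_eq_ordinaryHypergeometric (a b c : ℂ) : gaussHyp a b c = ₂F₁ a b c := by
  ext z
  rw [ordinaryHypergeometric, ordinaryHypergeometric_sum_eq]
  refine tsum_congr fun n ↦ ?_
  rw [smul_eq_mul, div_eq_mul_inv, mul_inv]
  ring

/-- contiguous relation
`(z - 1) uₙ' = -δ_{n+1} uₙ + (δ_{n+1} - αβ/(γ+n)) u_{n+1}` with
`δ_{n+1} = α + β - γ - n`, for `uₙ(z) = ₂F₁(α, β; γ + n; z)` on the unit disk. -/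
theorem gaussHyp_contiguous_zsub1_deriv
    (α β γ δ₀ : ℂ) (hδ₀ : 1 + α + β = γ + δ₀)
    (n : ℕ) (hγn : ∀ m : ℕ, γ + (n : ℂ) ≠ -(m : ℂ)) :
    ∀ z : ℂ, ‖z‖ < 1 →
      (z - 1) * deriv (fun w => gaussHyp α β (γ + n) w) z =
        -(δ₀ - (n + 1)) * gaussHyp α β (γ + n) z
          + ((δ₀ - (n + 1)) - α * β / (γ + n)) * gaussHyp α β (γ + n + 1) z := by
  intro z hz
  have hc : ∀ k : ℕ, (k : ℂ) ≠ -(γ + n) := fun k h ↦ hγn k (by rw [h, neg_neg])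
  have hδ : δ₀ - (n + 1) = α + β - (γ + n) := by linear_combination -hδ₀
  simp only [gaussHyp_eq_ordinaryHypergeometric, hδ]
  exact sub_one_mul_deriv_ordinaryHypergeometric α β hc hz
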